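/- Let R̂(ξ) be an a.e. Hermitian, non-negative definite matrix-valued function on ℝ^d with ∫_{ℝ^d} tr R̂(ξ) dξ < ∞, and let h(t,ξ) = ∫_0^∞ e^{−λt} μ(ξ,dλ) where μ(ξ,·) are finite non-negative Borel measures with ess sup_ξ μ(ξ,[0,∞)) < ∞ (with respect to 𝔯(dξ) = tr R̂(ξ)dξ). Then the matrix-valued function R_pq(t,x) := ∫_{ℝ^d} e^{i x·ξ} h(|t|,ξ) R̂_pq(ξ) dξ is non-negative definite: for every N ≥ 1, points (t_1,x_1),…,(t_N,x_N) ∈ ℝ^{1+d} and vectors η_1,…,η_N ∈ ℂ^d, Σ_{p,q=1}^N R(t_p − t_q, x_p − x_q) η_p · η̄_q ≥ 0. -/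

import Mathlib

/-!
For `λ ≥ 0` the kernel `e^{-λ|s-t|} = e^{-λs} e^{-λt} e^{2λ min(s,t)}` is positive semidefinite:
for a nondecreasing `f ≥ 0`, `f (min s t)` is a constant plus the Gram matrix of the indicators
of `(m, s]` in `L²(df)`. Integrating in `λ` against `μ(ξ,·)` shows that `h(|t_a - t_b|, ξ)` is
positive semidefinite; a Schur product with the rank-one phase `e^{i(x_a - x_b)·ξ}` and a Kronecker
product with `R̂(ξ)` keep it so, and so does integration in `ξ`. Integrability comes from
`|h| ≤ M` and `‖R̂_pq‖ ≤ tr R̂`, and where `tr R̂(ξ) = 0` we have `R̂(ξ) = 0`, so hypotheses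
holding `𝔯`-a.e. suffice.
-/

open MeasureTheory Matrix Set RCLike
open scoped ComplexOrder Kronecker

section

variable {ι κ 𝕜 : Type*} [RCLike 𝕜]

lemma Matrix.PosSemidef.norm_sq_apply_le {A : Matrix ι ι 𝕜} (hA : A.PosSemidef) (i j : ι) :
    ‖A i j‖ ^ 2 ≤ re (A i i) * re (A j j) := by
  have hdet := (RCLike.nonneg_iff.mp (hA.submatrix ![i, j]).det_nonneg).1
  simp only [det_fin_two, submatrix_apply, Matrix.cons_val_zero, Matrix.cons_val_one] at hdet
  rw [← hA.isHermitian.apply j i, ← hA.isHermitian.coe_re_apply_self i,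
    ← hA.isHermitian.coe_re_apply_self j, RCLike.star_def, RCLike.mul_conj, ← ofReal_mul,
    ← ofReal_pow, ← ofReal_sub, ofReal_re, sub_nonneg] at hdet
  exact hdet

variable [Fintype ι] [Fintype κ]

lemma Matrix.PosSemidef.re_apply_self_le_re_trace {A : Matrix ι ι 𝕜} (hA : A.PosSemidef)
    (i : ι) : re (A i i) ≤ re A.trace := by
  rw [trace, map_sum]
  exact Finset.single_le_sum (f := fun k => re (A k k))
    (fun k _ => (RCLike.nonneg_iff.mp hA.diag_nonneg).1) (Finset.mem_univ i)

lemma Matrix.PosSemidef.norm_apply_le_re_trace {A : Matrix ι ι 𝕜} (hA : A.PosSemidef)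
    (i j : ι) : ‖A i j‖ ≤ re A.trace := by
  have hi := hA.re_apply_self_le_re_trace i
  have hj := hA.re_apply_self_le_re_trace j
  have hi0 := (RCLike.nonneg_iff.mp (hA.diag_nonneg (i := i))).1
  have hj0 := (RCLike.nonneg_iff.mp (hA.diag_nonneg (i := j))).1
  refine le_of_sq_le_sq ?_ (hi0.trans hi)
  calc ‖A i j‖ ^ 2 ≤ re (A i i) * re (A j j) := hA.norm_sq_apply_le i j
    _ ≤ re A.trace ^ 2 := by rw [sq]; exact mul_le_mul hi hj hj0 (hi0.trans hi)

lemma Matrix.PosSemidef.sum_prod_mul_mul_conj_nonneg {Q : Matrix (ι × κ) (ι × κ) 𝕜}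
    (hQ : Q.PosSemidef) (η : ι → κ → 𝕜) :
    0 ≤ ∑ a, ∑ b, ∑ p, ∑ q, Q (a, p) (b, q) * η a p * starRingEnd 𝕜 (η b q) := by
  have := hQ.dotProduct_mulVec_nonneg (fun i => star (η i.1 i.2))
  simp only [dotProduct, mulVec, Pi.star_apply, star_star, Fintype.sum_prod_type,
    Finset.mul_sum] at this
  convert this using 2 with a
  rw [Finset.sum_comm]
  refine Finset.sum_congr rfl fun b _ => Finset.sum_congr rfl fun p _ =>
    Finset.sum_congr rfl fun q _ => ?_
  rw [RCLike.star_def]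
  ring

lemma posSemidef_measureReal_inter {α : Type*} [MeasurableSpace α] (ν : Measure α)
    {s : ι → Set α} (hs : ∀ i, MeasurableSet (s i)) (hν : ∀ i, ν (s i) ≠ ⊤) :
    (Matrix.of fun i j => (ν.real (s i ∩ s j) : 𝕜)).PosSemidef := by
  simp only [← L2.inner_indicatorConstLp_one_indicatorConstLp_one (𝕜 := 𝕜) (hs _) (hs _)
    (hν _) (hν _)]
  exact posSemidef_gram 𝕜 _

lemma StieltjesFunction.posSemidef_min (f : StieltjesFunction ℝ) (hf : ∀ u, 0 ≤ f u)
    (t : ι → ℝ) : (Matrix.of fun a b => (f (min (t a) (t b)) : 𝕜)).PosSemidef := by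
  set m := ⨅ a, t a
  have hm (a : ι) : m ≤ t a := ciInf_le (Finite.bddBelow_range t) a
  set c : ι → 𝕜 := fun _ => (√(f m) : 𝕜)
  have hsplit : (Matrix.of fun a b => (f (min (t a) (t b)) : 𝕜)) = vecMulVec c (star c) +
      Matrix.of fun a b => (f.measure.real (Ioc m (t a) ∩ Ioc m (t b)) : 𝕜) := by
    ext a b
    have hmono : f m ≤ f (min (t a) (t b)) := f.mono (le_min (hm a) (hm b))
    simp only [c, of_apply, Matrix.add_apply, vecMulVec_apply, Pi.star_apply, RCLike.star_def,
      RCLike.conj_ofReal, Ioc_inter_Ioc, max_self, measureReal_def, f.measure_Ioc,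
      ENNReal.toReal_ofReal (sub_nonneg.mpr hmono)]
    rw [← ofReal_mul, Real.mul_self_sqrt (hf m), ← ofReal_add, add_sub_cancel]
  rw [hsplit]
  exact (posSemidef_vecMulVec_self_star _).add
    (posSemidef_measureReal_inter _ (fun _ => measurableSet_Ioc)
      (fun _ => by rw [f.measure_Ioc]; exact ENNReal.ofReal_ne_top))

noncomputable def expStieltjes {l : ℝ} (hl : 0 ≤ l) : StieltjesFunction ℝ where
  toFun u := Real.exp (l * u)
  mono' _ _ h := Real.exp_le_exp.mpr (mul_le_mul_of_nonneg_left h hl)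
  right_continuous' _ := (by fun_prop : Continuous fun u => Real.exp (l * u)).continuousWithinAt

lemma neg_mul_abs_sub_eq_add_two_mul_min (l s u : ℝ) :
    -(l * |s - u|) = -(l * s) + -(l * u) + 2 * l * min s u := by
  rcases le_total s u with h | h
  · rw [min_eq_left h, abs_of_nonpos (sub_nonpos.mpr h)]; ring
  · rw [min_eq_right h, abs_of_nonneg (sub_nonneg.mpr h)]; ring

lemma posSemidef_exp_neg_mul_abs_sub {l : ℝ} (hl : 0 ≤ l) (t : ι → ℝ) :
    (Matrix.of fun a b => (Real.exp (-(l * |t a - t b|)) : 𝕜)).PosSemidef := by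
  set w : ι → 𝕜 := fun a => (Real.exp (-(l * t a)) : 𝕜)
  have hfactor : (Matrix.of fun a b => (Real.exp (-(l * |t a - t b|)) : 𝕜)) =
      vecMulVec w (star w) ⊙
        Matrix.of fun a b => (expStieltjes (by positivity : 0 ≤ 2 * l) (min (t a) (t b)) : 𝕜) := by
    ext a b
    simp only [w, expStieltjes, of_apply, hadamard_apply, vecMulVec_apply, Pi.star_apply,
      RCLike.star_def, RCLike.conj_ofReal]
    rw [← ofReal_mul, ← ofReal_mul, ← Real.exp_add, ← Real.exp_add,
      neg_mul_abs_sub_eq_add_two_mul_min]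
  rw [hfactor]
  exact (posSemidef_vecMulVec_self_star w).hadamard
    ((expStieltjes _).posSemidef_min (fun _ => (Real.exp_pos _).le) t)

variable {α : Type*} [MeasurableSpace α] {μ : Measure α}

lemma posSemidef_of_integral {K : α → Matrix ι ι 𝕜} (hK : ∀ i j, Integrable (fun x => K x i j) μ)
    (hpos : ∀ᵐ x ∂μ, (K x).PosSemidef) :
    (Matrix.of fun i j => ∫ x, K x i j ∂μ).PosSemidef := by
  rw [posSemidef_iff_dotProduct_mulVec]
  constructor
  · ext i j
    simp only [conjTranspose_apply, of_apply, RCLike.star_def, ← integral_conj]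
    refine integral_congr_ae (hpos.mono fun x hx => ?_)
    simpa using hx.isHermitian.apply i j
  · intro v
    have hint (i j : ι) : Integrable (fun x => star (v i) * (K x i j * v j)) μ :=
      ((hK i j).mul_const _).const_mul _
    have hform : star v ⬝ᵥ (Matrix.of fun i j => ∫ x, K x i j ∂μ) *ᵥ v =
        ∫ x, star v ⬝ᵥ K x *ᵥ v ∂μ := by
      simp only [dotProduct, mulVec, of_apply, Pi.star_apply, Finset.mul_sum]
      rw [integral_finsetSum _ fun i _ => integrable_finsetSum _ fun j _ => hint i j]
      refine Finset.sum_congr rfl fun i _ => ?_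
      rw [integral_finsetSum _ fun j _ => hint i j]
      refine Finset.sum_congr rfl fun j _ => ?_
      rw [integral_const_mul, integral_mul_const]
    rw [hform]
    exact integral_nonneg_of_ae (hpos.mono fun x hx => hx.dotProduct_mulVec_nonneg v)

lemma ae_eq_zero_or_of_ae_withDensity_re_trace {A : α → Matrix ι ι 𝕜}
    (hmeas : Measurable fun x => re (A x).trace) (hA : ∀ᵐ x ∂μ, (A x).PosSemidef) {P : α → Prop}
    (hP : ∀ᵐ x ∂μ.withDensity (fun x => ENNReal.ofReal (re (A x).trace)), P x) :
    ∀ᵐ x ∂μ, A x = 0 ∨ P x := by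
  rw [ae_withDensity_iff hmeas.ennreal_ofReal] at hP
  filter_upwards [hA, hP] with x hAx hPx
  by_cases htr : ENNReal.ofReal (re (A x).trace) = 0
  · left
    have hnonneg := RCLike.nonneg_iff.mp hAx.trace_nonneg
    refine hAx.trace_eq_zero_iff.mp (RCLike.ext ?_ (by simpa using hnonneg.2))
    simpa using le_antisymm (ENNReal.ofReal_eq_zero.mp htr) (by simpa using hnonneg.1)
  · exact Or.inr (hPx htr)

end

section Laplace

variable {ν : Measure ℝ}

lemma ae_nonneg_of_measure_Iio_eq_zero (hν : ν (Iio 0) = 0) : ∀ᵐ l ∂ν, 0 ≤ l := by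
  simp only [ae_iff, not_le]
  exact hν

lemma ae_norm_exp_neg_mul_le_one (hν : ν (Iio 0) = 0) {s : ℝ} (hs : 0 ≤ s) :
    ∀ᵐ l ∂ν, ‖Real.exp (-(l * s))‖ ≤ 1 := by
  filter_upwards [ae_nonneg_of_measure_Iio_eq_zero hν] with l hl
  rw [Real.norm_of_nonneg (Real.exp_pos _).le, Real.exp_le_one_iff, neg_nonpos]
  exact mul_nonneg hl hs

variable [IsFiniteMeasure ν]

lemma norm_integral_exp_neg_mul_le (hν : ν (Iio 0) = 0) {s : ℝ} (hs : 0 ≤ s) :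
    ‖∫ l, Real.exp (-(l * s)) ∂ν‖ ≤ ν.real univ := by
  simpa using norm_integral_le_of_norm_le_const (ae_norm_exp_neg_mul_le_one hν hs)

lemma posSemidef_integral_exp_neg_mul_abs_sub {ι 𝕜 : Type*} [Fintype ι] [RCLike 𝕜]
    (hν : ν (Iio 0) = 0) (t : ι → ℝ) :
    (Matrix.of fun a b => ((∫ l, Real.exp (-(l * |t a - t b|)) ∂ν : ℝ) : 𝕜)).PosSemidef := by
  simp only [← integral_ofReal]
  refine posSemidef_of_integral
    (K := fun l => Matrix.of fun a b => (Real.exp (-(l * |t a - t b|)) : 𝕜)) (fun a b => ?_) ?_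
  · exact (Integrable.of_bound (by fun_prop) 1
      (ae_norm_exp_neg_mul_le_one hν (abs_nonneg _))).ofReal
  · filter_upwards [ae_nonneg_of_measure_Iio_eq_zero hν] with l hl
    exact posSemidef_exp_neg_mul_abs_sub hl t

end Laplace

section CovarianceIntegrand

variable {ι κ n : Type*} [Fintype n]

lemma Complex.exp_I_mul_sum_sub (x y ξ : n → ℝ) :
    Complex.exp (Complex.I * ((∑ i, (x - y) i * ξ i : ℝ) : ℂ)) =
      Complex.exp (Complex.I * ((∑ i, x i * ξ i : ℝ) : ℂ)) *
        starRingEnd ℂ (Complex.exp (Complex.I * ((∑ i, y i * ξ i : ℝ) : ℂ))) := by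
  rw [← Complex.exp_conj, ← Complex.exp_add]
  simp only [Pi.sub_apply, sub_mul, Finset.sum_sub_distrib, map_mul, Complex.conj_I,
    Complex.conj_ofReal]
  push_cast
  ring_nf

noncomputable def covarianceIntegrand (g : ℝ → ℝ) (A : Matrix κ κ ℂ) (t : ι → ℝ) (x : ι → n → ℝ)
    (ξ : n → ℝ) : Matrix (ι × κ) (ι × κ) ℂ :=
  Matrix.of fun i j => Complex.exp (Complex.I * ((∑ k, (x i.1 - x j.1) k * ξ k : ℝ) : ℂ)) *
    ((g |t i.1 - t j.1| : ℝ) : ℂ) * A i.2 j.2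

@[simp]
lemma covarianceIntegrand_zero (g : ℝ → ℝ) (t : ι → ℝ) (x : ι → n → ℝ) (ξ : n → ℝ) :
    covarianceIntegrand g (0 : Matrix κ κ ℂ) t x ξ = 0 := by
  ext i j
  simp [covarianceIntegrand]

lemma posSemidef_covarianceIntegrand [Fintype ι] [Fintype κ] {g : ℝ → ℝ} {A : Matrix κ κ ℂ}
    {t : ι → ℝ} (hg : (Matrix.of fun a b => ((g |t a - t b| : ℝ) : ℂ)).PosSemidef)
    (hA : A.PosSemidef) (x : ι → n → ℝ) (ξ : n → ℝ) : (covarianceIntegrand g A t x ξ).PosSemidef := by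
  set φ : ι → ℂ := fun a => Complex.exp (Complex.I * ((∑ k, x a k * ξ k : ℝ) : ℂ))
  have hfactor : covarianceIntegrand g A t x ξ =
      ((Matrix.of fun a b => ((g |t a - t b| : ℝ) : ℂ)) ⊙ vecMulVec φ (star φ)) ⊗ₖ A := by
    ext i j
    simp only [covarianceIntegrand, φ, kroneckerMap_apply, hadamard_apply, of_apply,
      vecMulVec_apply, Pi.star_apply, RCLike.star_def, Complex.exp_I_mul_sum_sub]
    ring
  rw [hfactor]
  exact (hg.hadamard (posSemidef_vecMulVec_self_star φ)).kronecker hA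

lemma norm_covarianceIntegrand_apply_le [Fintype κ] {g : ℝ → ℝ} {A : Matrix κ κ ℂ} {C : ℝ}
    (hg : ∀ s, 0 ≤ s → ‖g s‖ ≤ C) (hA : A.PosSemidef) (t : ι → ℝ) (x : ι → n → ℝ) (ξ : n → ℝ)
    (i j : ι × κ) : ‖covarianceIntegrand g A t x ξ i j‖ ≤ C * re A.trace := by
  simp only [covarianceIntegrand, of_apply, norm_mul, Complex.norm_exp_I_mul_ofReal, one_mul,
    Complex.norm_real]
  exact mul_le_mul (hg _ (abs_nonneg _)) (hA.norm_apply_le_re_trace _ _) (norm_nonneg _)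
    ((norm_nonneg _).trans (hg 0 le_rfl))

end CovarianceIntegrand

/-- Let `R̂` be a.e. Hermitian non-negative definite with integrable trace,
and let `h(t,ξ) = ∫_0^∞ e^{-λ t} μ(ξ,dλ)` for finite non-negative Borel measures `μ(ξ,·)` on
`[0,∞)` with `esssup_ξ μ(ξ,[0,∞)) < ∞` (w.r.t. `𝔯(dξ) = tr R̂(ξ) dξ`).  Then
`R_pq(t,x) := ∫ e^{i x·ξ} h(|t|,ξ) R̂_pq(ξ) dξ` is non-negative definite: for all `N`, points
`(t_a, x_a)` and vectors `η_a ∈ ℂ^d`, `Σ_{a,b} R(t_a - t_b, x_a - x_b) η_a · conj η_b ≥ 0`. -/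
theorem covariance_nonneg_definite_of_completely_monotone
    (d : ℕ) (Rh : (Fin d → ℝ) → Matrix (Fin d) (Fin d) ℂ)
    (hRhMeas : ∀ p q, Measurable fun ξ : Fin d → ℝ => Rh ξ p q)
    (hRh : ∀ᵐ ξ : Fin d → ℝ, (Rh ξ).PosSemidef)
    (hRhInt : Integrable fun ξ : Fin d → ℝ => (Rh ξ).trace.re)
    (frakr : Measure (Fin d → ℝ))
    (hfrakr : frakr = volume.withDensity fun ξ => ENNReal.ofReal ((Rh ξ).trace.re))
    (μ : (Fin d → ℝ) → Measure ℝ) (hμfin : ∀ ξ, IsFiniteMeasure (μ ξ))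
    (hμpos : ∀ᵐ ξ ∂frakr, (μ ξ) (Set.Iio 0) = 0)
    (M : ℝ) (hM : ∀ᵐ ξ ∂frakr, ((μ ξ) Set.univ).toReal ≤ M)
    (h : ℝ → (Fin d → ℝ) → ℝ)
    (hhMeas : Measurable (Function.uncurry h))
    (hh : ∀ t ξ, h t ξ = ∫ l, Real.exp (-(l * t)) ∂(μ ξ))
    (R : ℝ → (Fin d → ℝ) → Matrix (Fin d) (Fin d) ℂ)
    (hR : ∀ t x p q, R t x p q
      = ∫ ξ, Complex.exp (Complex.I * ((∑ i, x i * ξ i : ℝ) : ℂ))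
          * ((h |t| ξ : ℝ) : ℂ) * Rh ξ p q) :
    ∀ (N : ℕ) (t : Fin N → ℝ) (x : Fin N → Fin d → ℝ) (η : Fin N → Fin d → ℂ),
      0 ≤ ∑ a, ∑ b, ∑ p, ∑ q,
        R (t a - t b) (x a - x b) p q * η a p * (starRingEnd ℂ) (η b q) := by
  intro N t x η
  have htrace : Measurable fun ξ => (Rh ξ).trace.re :=
    Complex.measurable_re.comp (Finset.measurable_sum _ fun p _ => hRhMeas p p)
  subst hfrakr
  have hgood := ae_eq_zero_or_of_ae_withDensity_re_trace htrace hRh (hμpos.and hM)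
  let K ξ := covarianceIntegrand (h · ξ) (Rh ξ) t x ξ
  have hK_meas (i j) : Measurable fun ξ => K ξ i j := by
    have hh' (s : ℝ) : Measurable (h s) := hhMeas.comp measurable_prodMk_left
    have hRh' := hRhMeas i.2 j.2
    simp only [K, covarianceIntegrand, of_apply]
    fun_prop
  have hK_int (i j) : Integrable fun ξ => K ξ i j := by
    refine (hRhInt.const_mul (max M 0)).mono' (hK_meas i j).aestronglyMeasurable ?_
    filter_upwards [hgood, hRh] with ξ hξ hpsd
    rcases hξ with hzero | ⟨hneg, hmass⟩
    · simp [K, hzero]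
    · have := hμfin ξ
      refine norm_covarianceIntegrand_apply_le (fun s hs => ?_) hpsd t x ξ i j
      rw [hh]
      exact (norm_integral_exp_neg_mul_le hneg hs).trans (hmass.trans (le_max_left _ _))
  have hK_pos : ∀ᵐ ξ, (K ξ).PosSemidef := by
    filter_upwards [hgood, hRh] with ξ hξ hpsd
    rcases hξ with hzero | ⟨hneg, -⟩
    · simp only [K, hzero, covarianceIntegrand_zero]
      exact PosSemidef.zero
    · have := hμfin ξ
      simp only [K, hh]
      exact posSemidef_covarianceIntegrand (posSemidef_integral_exp_neg_mul_abs_sub hneg t) hpsd x ξ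
  simpa only [hR, K, covarianceIntegrand, of_apply] using
    (posSemidef_of_integral hK_int hK_pos).sum_prod_mul_mul_conj_nonneg η
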